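/- arXiv:2105.13056 — 6 statements merged into one kernel-verified Lean document; each statement's English description precedes it below -/
import Mathlib

section
/- Let T > 0, h ∈ C([0,T]) with h(0) = h₀ > 0 and h nondecreasing, let d > 0, let J satisfy condition (J), and let c be bounded on D = {(t,x) : 0 < t ≤ T, 0 ≤ x < h(t)}. Suppose ψ and ψ_t are continuous on the closure of D, ψ_t(t,x) ≥ d ∫_0^{h(t)} J(x−y) ψ(t,y) dy + c(t,x) ψ(t,x) for (t,x) ∈ D, ψ(t,h(t)) ≥ 0 for 0 < t ≤ T, and ψ(0,x) ≥ 0 for 0 ≤ x ≤ h₀. Then ψ ≥ 0 on the closure of D. -/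
open MeasureTheory Filter Set intervalIntegral Topology

/-!
Suppose `ψ` takes a negative value and put `Ψ(t, x) = ψ(t, x) e^{-kt}` with `k = d + M + 1`,
where `|c| ≤ M`. On the compact closure of `D` the function `Ψ` attains a negative minimum at
some `(t₀, x₀)`; the parabolic boundary data force `t₀ > 0` and `x₀ < h(t₀)`. Minimality in time
(from the left, where `(s, x₀)` stays in `D` because `h` is continuous) gives
`ψ_t ≤ k ψ` at `(t₀, x₀)`, and minimality in space makes the nonlocal term at least
`d ψ(t₀, x₀)`, because `J ≥ 0` has mass at most one and `ψ(t₀, x₀) < 0`. The supersolution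
inequality then yields `k ψ ≥ ψ_t ≥ (d + M) ψ`, impossible since `ψ(t₀, x₀) < 0`.
-/

def subgraphIcc (f : ℝ → ℝ) (a b c : ℝ) : Set (ℝ × ℝ) :=
  {p | p.1 ∈ Icc a b ∧ p.2 ∈ Icc c (f p.1)}

section subgraphIcc

variable {f : ℝ → ℝ} {a b c : ℝ}

lemma isCompact_subgraphIcc (hf : ContinuousOn f (Icc a b)) :
    IsCompact (subgraphIcc f a b c) := by
  obtain ⟨M, hM⟩ := isCompact_Icc.bddAbove_image hf
  have hclosed : IsClosed {p ∈ Icc a b ×ˢ Ici c | p.2 ≤ f p.1} :=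
    (isClosed_Icc.prod isClosed_Ici).isClosed_le continuous_snd.continuousOn
      (hf.comp continuous_fst.continuousOn fun p hp => hp.1)
  have hbox : subgraphIcc f a b c ⊆ Icc a b ×ˢ Icc c M := fun p ⟨ht, hx⟩ =>
    ⟨ht, hx.1, hx.2.trans (hM (mem_image_of_mem f ht))⟩
  refine (isCompact_Icc.prod isCompact_Icc).of_isClosed_subset ?_ hbox
  convert hclosed using 1
  ext p
  simp only [subgraphIcc, mem_ofPred_eq, mem_prod, mem_Icc, mem_Ici]
  tauto

lemma eventually_mem_subgraphIcc_nhdsLT {t x : ℝ} (hf : ContinuousOn f (Icc a b))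
    (ht : t ∈ Ioc a b) (hx : x ∈ Ico c (f t)) :
    ∀ᶠ s in 𝓝[<] t, (s, x) ∈ subgraphIcc f a b c := by
  have hIoo : Ioo a t ∈ 𝓝[<] t := Ioo_mem_nhdsLT ht.1
  have hIcc : Icc a b ∈ 𝓝[<] t :=
    mem_of_superset hIoo fun s hs => ⟨hs.1.le, hs.2.le.trans ht.2⟩
  have hf_left : Tendsto f (𝓝[<] t) (𝓝 (f t)) :=
    (hf t (Ioc_subset_Icc_self ht)).mono_left (nhdsWithin_le_iff.2 hIcc)
  filter_upwards [hIcc, hf_left.eventually (eventually_gt_nhds hx.2)] with s hs hxs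
  exact ⟨hs, hx.1, hxs.le⟩

end subgraphIcc

lemma HasDerivAt.nonpos_of_eventually_le_nhdsLT {g : ℝ → ℝ} {g' t : ℝ} (hg : HasDerivAt g g' t)
    (hmin : ∀ᶠ s in 𝓝[<] t, g t ≤ g s) : g' ≤ 0 := by
  refine le_of_tendsto (hasDerivAt_iff_tendsto_slope_left_right.1 hg).1 ?_
  filter_upwards [hmin, self_mem_nhdsWithin] with s hs hst
  rw [slope_def_field]
  exact div_nonpos_of_nonneg_of_nonpos (sub_nonneg.2 hs) (sub_nonpos.2 (le_of_lt hst))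

lemma HasDerivAt.le_mul_of_eventually_le_nhdsLT {f : ℝ → ℝ} {f' k t : ℝ}
    (hf : HasDerivAt f f' t)
    (hmin : ∀ᶠ s in 𝓝[<] t, f t * Real.exp (-k * t) ≤ f s * Real.exp (-k * s)) :
    f' ≤ k * f t := by
  have hexp : HasDerivAt (fun s => Real.exp (-k * s)) (Real.exp (-k * t) * -k) t := by
    simpa using ((hasDerivAt_id t).const_mul (-k)).exp
  have hweighted := (hf.mul hexp).nonpos_of_eventually_le_nhdsLT hmin
  have hfactor : f' * Real.exp (-k * t) + f t * (Real.exp (-k * t) * -k) =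
      (f' - k * f t) * Real.exp (-k * t) := by
    ring
  rw [hfactor] at hweighted
  linarith [nonpos_of_mul_nonpos_left hweighted (Real.exp_pos _)]

lemma intervalIntegral_comp_sub_le_integral {J : ℝ → ℝ} (hJnn : ∀ x, 0 ≤ J x)
    (hJint : Integrable J) {x L : ℝ} (hL : 0 ≤ L) :
    ∫ y in (0 : ℝ)..L, J (x - y) ≤ ∫ y, J y := by
  rw [intervalIntegral.integral_comp_sub_left J x,
    intervalIntegral.integral_of_le (by linarith : x - L ≤ x - 0)]
  exact setIntegral_le_integral hJint (Eventually.of_forall hJnn)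

lemma le_intervalIntegral_kernel_mul {J φ : ℝ → ℝ} (hJnn : ∀ x, 0 ≤ J x) (hJint : Integrable J)
    (hJ1 : ∫ y, J y ≤ 1) {x L m : ℝ} (hL : 0 ≤ L) (hm : m ≤ 0)
    (hφ : ∀ y ∈ Icc 0 L, m ≤ φ y) :
    m ≤ ∫ y in (0 : ℝ)..L, J (x - y) * φ y := by
  by_cases hint : IntervalIntegrable (fun y => J (x - y) * φ y) volume 0 L
  swap
  -- a non-integrable integrand has integral `0 ≥ m`
  · rw [intervalIntegral.integral_undef hint]
    exact hm
  have hJx : IntervalIntegrable (fun y => J (x - y)) volume 0 L :=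
    (hJint.comp_sub_left x).intervalIntegrable
  have hmass : 0 ≤ ∫ y in (0 : ℝ)..L, J (x - y) :=
    intervalIntegral.integral_nonneg hL fun y _ => hJnn _
  have hmass_le := (intervalIntegral_comp_sub_le_integral hJnn hJint (x := x) hL).trans hJ1
  calc m ≤ (∫ y in (0 : ℝ)..L, J (x - y)) * m := by nlinarith
    _ = ∫ y in (0 : ℝ)..L, J (x - y) * m := (intervalIntegral.integral_mul_const _ _).symm
    _ ≤ ∫ y in (0 : ℝ)..L, J (x - y) * φ y :=
      intervalIntegral.integral_mono_on hL (hJx.mul_const m) hint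
        fun y hy => mul_le_mul_of_nonneg_left (hφ y hy) (hJnn _)

theorem stmt4_general (T h₀ d : ℝ)
    (h : ℝ → ℝ) (hhc : ContinuousOn h (Icc 0 T)) (hh0 : h 0 = h₀)
    (hd : 0 < d)
    (J : ℝ → ℝ)
    (hJnn : ∀ x, 0 ≤ J x)
    (hJint : Integrable J) (hJ1 : ∫ x, J x = 1)
    (c : ℝ → ℝ → ℝ)
    (hcbdd : ∃ M, ∀ t ∈ Ioc 0 T, ∀ x ∈ Ico 0 (h t), |c t x| ≤ M)
    (ψ ψt : ℝ → ℝ → ℝ)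
    (hψcont : ContinuousOn (fun p : ℝ × ℝ => ψ p.1 p.2)
      {p : ℝ × ℝ | p.1 ∈ Icc 0 T ∧ p.2 ∈ Icc 0 (h p.1)})
    (hderiv : ∀ t ∈ Icc 0 T, ∀ x ∈ Icc 0 (h t),
      HasDerivAt (fun s => ψ s x) (ψt t x) t)
    (hineq : ∀ t ∈ Ioc 0 T, ∀ x ∈ Ico 0 (h t),
      d * (∫ y in (0:ℝ)..(h t), J (x - y) * ψ t y) + c t x * ψ t x ≤ ψt t x)
    (hbd : ∀ t ∈ Ioc 0 T, 0 ≤ ψ t (h t))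
    (hinit : ∀ x ∈ Icc 0 h₀, 0 ≤ ψ 0 x) :
    ∀ t ∈ Icc 0 T, ∀ x ∈ Icc 0 (h t), 0 ≤ ψ t x := by
  obtain ⟨M, hM⟩ := hcbdd
  set k := d + M + 1
  by_contra! hneg
  obtain ⟨t₁, ht₁, x₁, hx₁, hψ₁⟩ := hneg
  have hΨ : ContinuousOn (fun p : ℝ × ℝ => ψ p.1 p.2 * Real.exp (-k * p.1))
      (subgraphIcc h 0 T 0) :=
    hψcont.mul (by fun_prop)
  obtain ⟨⟨t₀, x₀⟩, ⟨ht₀Icc, hx₀Icc⟩, hΨmin⟩ :=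
    (isCompact_subgraphIcc hhc).exists_isMinOn ⟨(t₁, x₁), ht₁, hx₁⟩ hΨ
  have hmin : ∀ p ∈ subgraphIcc h 0 T 0,
      ψ t₀ x₀ * Real.exp (-k * t₀) ≤ ψ p.1 p.2 * Real.exp (-k * p.1) := fun p hp => hΨmin hp
  have hψ₀ : ψ t₀ x₀ < 0 := neg_of_mul_neg_left
    ((hmin (t₁, x₁) ⟨ht₁, hx₁⟩).trans_lt (mul_neg_of_neg_of_pos hψ₁ (Real.exp_pos _)))
    (Real.exp_pos _).le
  have ht₀ : t₀ ∈ Ioc 0 T := ⟨lt_of_le_of_ne ht₀Icc.1 (by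
    rintro rfl
    exact (hinit x₀ (hh0 ▸ hx₀Icc)).not_gt hψ₀), ht₀Icc.2⟩
  have hx₀ : x₀ ∈ Ico 0 (h t₀) := ⟨hx₀Icc.1, lt_of_le_of_ne hx₀Icc.2 (by
    rintro rfl
    exact (hbd t₀ ht₀).not_gt hψ₀)⟩
  have htime : ψt t₀ x₀ ≤ k * ψ t₀ x₀ :=
    (hderiv t₀ (Ioc_subset_Icc_self ht₀) x₀ (Ico_subset_Icc_self hx₀)
      ).le_mul_of_eventually_le_nhdsLT
      ((eventually_mem_subgraphIcc_nhdsLT hhc ht₀ hx₀).mono fun s hs => hmin (s, x₀) hs)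
  have hspace : ψ t₀ x₀ ≤ ∫ y in (0 : ℝ)..(h t₀), J (x₀ - y) * ψ t₀ y :=
    le_intervalIntegral_kernel_mul hJnn hJint hJ1.le (hx₀.1.trans hx₀.2.le) hψ₀.le
      fun y hy => le_of_mul_le_mul_right (hmin (t₀, y) ⟨Ioc_subset_Icc_self ht₀, hy⟩)
        (Real.exp_pos _)
  have hnonlocal := mul_le_mul_of_nonneg_left hspace hd.le
  have hreaction := mul_le_mul_of_nonpos_right (abs_le.1 (hM t₀ ht₀ x₀ hx₀)).2 hψ₀.le
  nlinarith [hineq t₀ ht₀ x₀ hx₀]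

/-- Maximum principle, Lemma 2.1: with a nondecreasing moving
boundary h and bounded coefficient c, a supersolution ψ of the nonlocal
equation that is nonnegative on the parabolic boundary is nonnegative on the
closure of D = {(t,x) : 0 < t ≤ T, 0 ≤ x < h(t)}. -/
theorem stmt4 (T h₀ d : ℝ) (hT : 0 < T) (hh₀ : 0 < h₀)
    (h : ℝ → ℝ) (hhc : ContinuousOn h (Icc 0 T)) (hh0 : h 0 = h₀)
    (hhmono : MonotoneOn h (Icc 0 T)) (hd : 0 < d)
    (J : ℝ → ℝ)
    (hJc : Continuous J) (hJnn : ∀ x, 0 ≤ J x) (hJ0 : 0 < J 0)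
    (hJeven : ∀ x, J (-x) = J x)
    (hJint : Integrable J) (hJ1 : ∫ x, J x = 1)
    (c : ℝ → ℝ → ℝ)
    (hcbdd : ∃ M, ∀ t ∈ Ioc 0 T, ∀ x ∈ Ico 0 (h t), |c t x| ≤ M)
    (ψ ψt : ℝ → ℝ → ℝ)
    (hψcont : ContinuousOn (fun p : ℝ × ℝ => ψ p.1 p.2)
      {p : ℝ × ℝ | p.1 ∈ Icc 0 T ∧ p.2 ∈ Icc 0 (h p.1)})
    (hψtcont : ContinuousOn (fun p : ℝ × ℝ => ψt p.1 p.2)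
      {p : ℝ × ℝ | p.1 ∈ Icc 0 T ∧ p.2 ∈ Icc 0 (h p.1)})
    (hderiv : ∀ t ∈ Icc 0 T, ∀ x ∈ Icc 0 (h t),
      HasDerivAt (fun s => ψ s x) (ψt t x) t)
    (hineq : ∀ t ∈ Ioc 0 T, ∀ x ∈ Ico 0 (h t),
      d * (∫ y in (0:ℝ)..(h t), J (x - y) * ψ t y) + c t x * ψ t x ≤ ψt t x)
    (hbd : ∀ t ∈ Ioc 0 T, 0 ≤ ψ t (h t))
    (hinit : ∀ x ∈ Icc 0 h₀, 0 ≤ ψ 0 x) :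
    ∀ t ∈ Icc 0 T, ∀ x ∈ Icc 0 (h t), 0 ≤ ψ t x :=
  stmt4_general T h₀ d h hhc hh0 hd J hJnn hJint hJ1 c hcbdd ψ ψt hψcont hderiv hineq hbd hinit
end

section
/- Let d, a₀ > 0 and J satisfy condition (J), and let j(x) = ∫_0^∞ J(x−y) dy. For l > 0 define λ_p(l) = inf { λ ∈ ℝ : there exists a continuous function φ > 0 on [0,l] with d ∫_0^l J(x−y) φ(y) dy − d j(x) φ(x) + a₀ φ(x) ≤ λ φ(x) for all x ∈ [0,l] }. Then λ_p(l) ≤ a₀ for all l > 0, and lim_{l→∞} λ_p(l) = a₀. -/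
/-
Upper bound: `φ ≡ 1` is an admissible test function for `λ = a₀`, because
`∫₀ˡ J (x - y) dy ≤ ∫_{-∞}^x J = j x`.

Lower bound: if `φ > 0` is admissible for `λ`, divide the inequality by `φ x` and integrate over
`[0, l]`. Symmetrizing the double integral of `J (x - y) φ y / φ x` in `(x, y)` and using
`s + 1/s ≥ 2` shows that it dominates `∫₀ˡ ∫₀ˡ J (x - y) dy dx = ∫₀ˡ j - ∫_{-l}^0 j`
(this is the Rayleigh quotient tested with `ψ ≡ 1`). Hence `λ ≥ a₀ - d · l⁻¹ ∫_{-l}^0 j`, and this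
Cesàro mean tends to `0` because `j` is monotone with `j (-∞) = 0`.
-/

open MeasureTheory Filter Set intervalIntegral

/-- The generalized principal eigenvalue `λ_p(L^N_{(0,l)} + a₀)`. -/
noncomputable def lamP (d a₀ : ℝ) (J j : ℝ → ℝ) (l : ℝ) : ℝ :=
  sInf {lam : ℝ | ∃ φ : ℝ → ℝ, ContinuousOn φ (Icc 0 l) ∧
    (∀ x ∈ Icc 0 l, 0 < φ x) ∧
    ∀ x ∈ Icc 0 l,
      d * (∫ y in (0:ℝ)..l, J (x - y) * φ y) - d * j x * φ x + a₀ * φ x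
        ≤ lam * φ x}

open Topology

theorem two_mul_le_mul_div_add_mul_div {a b c : ℝ} (ha : 0 < a) (hb : 0 < b) (hc : 0 ≤ c) :
    2 * c ≤ c * b / a + c * a / b := by
  have h : 2 ≤ b / a + a / b := by
    rw [div_add_div _ _ ha.ne' hb.ne', le_div_iff₀ (mul_pos ha hb)]
    nlinarith [sq_nonneg (a - b)]
  calc 2 * c ≤ c * (b / a + a / b) := by nlinarith
    _ = c * b / a + c * a / b := by ring

theorem intervalIntegral_integral_swap {f : ℝ → ℝ → ℝ} (hf : Continuous (Function.uncurry f))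
    {a b : ℝ} (hab : a ≤ b) :
    ∫ x in a..b, ∫ y in a..b, f x y = ∫ y in a..b, ∫ x in a..b, f x y := by
  simp_rw [intervalIntegral.integral_of_le hab]
  apply integral_integral_swap
  rw [Measure.prod_restrict, ← Measure.volume_eq_prod]
  exact (hf.continuousOn.integrableOn_compact (isCompact_Icc.prod isCompact_Icc)).mono_set
    (prod_mono Ioc_subset_Icc_self Ioc_subset_Icc_self)

theorem integral_integral_le_integral_integral_mul_div {k : ℝ → ℝ → ℝ}
    (hk : Continuous (Function.uncurry k)) (hk_symm : ∀ x y, k x y = k y x)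
    (hk_nonneg : ∀ x y, 0 ≤ k x y) {φ : ℝ → ℝ} (hφ : Continuous φ) (hφ_pos : ∀ x, 0 < φ x)
    {a b : ℝ} (hab : a ≤ b) :
    ∫ x in a..b, ∫ y in a..b, k x y ≤ ∫ x in a..b, ∫ y in a..b, k x y * φ y / φ x := by
  set P : ℝ → ℝ → ℝ := fun x y => k x y * φ y / φ x
  have hP : Continuous (Function.uncurry P) :=
    (hk.mul (hφ.comp continuous_snd)).div (hφ.comp continuous_fst) fun p => (hφ_pos _).ne'
  have hPt : Continuous (Function.uncurry fun x y => P y x) := hP.comp continuous_swap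
  have hpt : ∀ x y, 2 * k x y ≤ P x y + P y x := fun x y => by
    simp only [P, hk_symm y x]
    exact two_mul_le_mul_div_add_mul_div (hφ_pos x) (hφ_pos y) (hk_nonneg x y)
  have h2k : Continuous (Function.uncurry fun x y => 2 * k x y) := continuous_const.mul hk
  have hPPt : Continuous (Function.uncurry fun x y => P x y + P y x) := hP.add hPt
  have hslice {f : ℝ → ℝ → ℝ} (hf : Continuous (Function.uncurry f)) (x : ℝ) :
      IntervalIntegrable (f x) volume a b :=
    (hf.comp (Continuous.prodMk_right x)).intervalIntegrable a b
  have hinner {f : ℝ → ℝ → ℝ} (hf : Continuous (Function.uncurry f)) :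
      IntervalIntegrable (fun x => ∫ y in a..b, f x y) volume a b :=
    (continuous_parametric_intervalIntegral_of_continuous' hf a b).intervalIntegrable a b
  have hsum : 2 * ∫ x in a..b, ∫ y in a..b, k x y
      ≤ (∫ x in a..b, ∫ y in a..b, P x y) + ∫ x in a..b, ∫ y in a..b, P y x :=
    calc 2 * ∫ x in a..b, ∫ y in a..b, k x y = ∫ x in a..b, ∫ y in a..b, 2 * k x y := by
          simp only [intervalIntegral.integral_const_mul]
      _ ≤ ∫ x in a..b, ∫ y in a..b, (P x y + P y x) := by
          refine intervalIntegral.integral_mono hab (hinner h2k) (hinner hPPt) fun x => ?_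
          exact intervalIntegral.integral_mono hab (hslice h2k x) (hslice hPPt x) (hpt x)
      _ = _ := by
          rw [← intervalIntegral.integral_add (hinner hP) (hinner hPt)]
          exact intervalIntegral.integral_congr fun x _ =>
            intervalIntegral.integral_add (hslice hP x) (hslice hPt x)
  have hswap : ∫ x in a..b, ∫ y in a..b, P y x = ∫ x in a..b, ∫ y in a..b, P x y :=
    intervalIntegral_integral_swap hPt hab
  linarith

theorem integral_Ioi_comp_sub (f : ℝ → ℝ) (x a : ℝ) :
    ∫ y in Ioi a, f (x - y) = ∫ z in Iio (x - a), f z := by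
  have hemb : MeasurableEmbedding (fun t : ℝ => x - t) :=
    (Homeomorph.subLeft x).isClosedEmbedding.measurableEmbedding
  rw [← image_const_sub_Ioi]
  exact ((Measure.measurePreserving_sub_left volume x).setIntegral_image_emb hemb f _).symm

theorem monotone_integral_Iic {f : ℝ → ℝ} (hf : Integrable f) (hf_nonneg : ∀ x, 0 ≤ f x) :
    Monotone fun t => ∫ z in Iic t, f z := fun _ _ hst =>
  setIntegral_mono_set hf.integrableOn (Eventually.of_forall hf_nonneg)
    (Iic_subset_Iic.2 hst).eventuallyLE

theorem tendsto_integral_Iic_atBot {f : ℝ → ℝ} (hf : Integrable f) :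
    Tendsto (fun t => ∫ z in Iic t, f z) atBot (𝓝 0) := by
  have h := intervalIntegral_tendsto_integral_Iic 0 hf.integrableOn tendsto_id
  have hsub : ∀ t, ∫ z in Iic t, f z = (∫ z in Iic 0, f z) - ∫ z in t..0, f z := fun t => by
    rw [← intervalIntegral.integral_Iic_sub_Iic hf.integrableOn hf.integrableOn]; ring
  simpa only [sub_self, id, ← hsub] using (tendsto_const_nhds (x := ∫ z in Iic 0, f z)).sub h

theorem integral_comp_sub_eq_integral_Iic_sub {f : ℝ → ℝ} (hf : Integrable f) (x l : ℝ) :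
    ∫ y in (0:ℝ)..l, f (x - y) = (∫ z in Iic x, f z) - ∫ z in Iic (x - l), f z := by
  rw [intervalIntegral.integral_comp_sub_left, sub_zero,
    intervalIntegral.integral_Iic_sub_Iic hf.integrableOn hf.integrableOn]

theorem tendsto_inv_mul_integral_of_tendsto_atBot {f : ℝ → ℝ} (hf : Monotone f)
    (hf0 : Tendsto f atBot (𝓝 0)) :
    Tendsto (fun l => l⁻¹ * ∫ x in -l..0, f x) atTop (𝓝 0) := by
  have hrescale : ∀ l : ℝ, 0 < l → l⁻¹ * ∫ x in -l..0, f x = ∫ s in (-1)..0, f (l * s) := by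
    intro l hl
    rw [intervalIntegral.integral_comp_mul_left _ hl.ne', smul_eq_mul, mul_neg_one, mul_zero]
  have hlim : Tendsto (fun l => ∫ s in (-1)..0, f (l * s)) atTop
      (𝓝 (∫ _ in (-1)..(0:ℝ), (0:ℝ))) := by
    refine intervalIntegral.tendsto_integral_filter_of_dominated_convergence (fun _ => f 0)
      (Eventually.of_forall fun l => ?_) ?_ intervalIntegrable_const ?_
    · exact (hf.measurable.comp (measurable_const_mul l)).aestronglyMeasurable
    · filter_upwards [eventually_ge_atTop 0] with l hl
      refine Eventually.of_forall fun s hs => ?_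
      rw [uIoc_of_le (by norm_num)] at hs
      rw [Real.norm_of_nonneg (hf.le_of_tendsto hf0 _)]
      exact hf (mul_nonpos_of_nonneg_of_nonpos hl hs.2)
    · filter_upwards [Measure.ae_ne volume 0] with s hs0 hs
      rw [uIoc_of_le (by norm_num)] at hs
      exact hf0.comp (tendsto_id.atTop_mul_const_of_neg (lt_of_le_of_ne hs.2 hs0))
  simpa using hlim.congr' (eventually_gt_atTop 0 |>.mono fun l hl => (hrescale l hl).symm)

def lamPSet (d a₀ : ℝ) (J j : ℝ → ℝ) (l : ℝ) : Set ℝ :=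
  {lam : ℝ | ∃ φ : ℝ → ℝ, ContinuousOn φ (Icc 0 l) ∧
    (∀ x ∈ Icc 0 l, 0 < φ x) ∧
    ∀ x ∈ Icc 0 l,
      d * (∫ y in (0:ℝ)..l, J (x - y) * φ y) - d * j x * φ x + a₀ * φ x
        ≤ lam * φ x}

theorem lamP_eq_sInf (d a₀ : ℝ) (J j : ℝ → ℝ) (l : ℝ) :
    lamP d a₀ J j l = sInf (lamPSet d a₀ J j l) := rfl

theorem mem_lamPSet_self {d : ℝ} (hd : 0 ≤ d) (a₀ : ℝ) {J j : ℝ → ℝ} (hJnn : ∀ x, 0 ≤ J x)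
    (hJint : Integrable J) (hj : ∀ x, j x = ∫ z in Iic x, J z) (l : ℝ) :
    a₀ ∈ lamPSet d a₀ J j l := by
  refine ⟨fun _ => 1, continuousOn_const, fun _ _ => one_pos, fun x _ => ?_⟩
  have htail : 0 ≤ ∫ z in Iic (x - l), J z := setIntegral_nonneg measurableSet_Iic fun y _ => hJnn y
  have hle : d * ∫ y in (0:ℝ)..l, J (x - y) ≤ d * j x := by
    rw [integral_comp_sub_eq_integral_Iic_sub hJint, hj]
    exact mul_le_mul_of_nonneg_left (sub_le_self _ htail) hd
  simp only [mul_one]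
  linarith

theorem sub_le_of_mem_lamPSet {d : ℝ} (hd : 0 ≤ d) {a₀ lam l : ℝ} (hl : 0 < l) {J j : ℝ → ℝ}
    (hJc : Continuous J) (hJnn : ∀ x, 0 ≤ J x) (hJeven : ∀ x, J (-x) = J x)
    (hJint : Integrable J) (hj : ∀ x, j x = ∫ z in Iic x, J z)
    (hlam : lam ∈ lamPSet d a₀ J j l) :
    a₀ - d * (l⁻¹ * ∫ x in -l..0, j x) ≤ lam := by
  obtain ⟨φ, hφc, hφpos, hφ⟩ := hlam
  set ψ := IccExtend hl.le ((Icc 0 l).domRestrict φ)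
  have hψc : Continuous ψ := continuous_IccExtend_iff.2 hφc.domRestrict
  have hψpos : ∀ x, 0 < ψ x := fun x => hφpos _ (projIcc 0 l hl.le x).2
  have hψφ : EqOn ψ φ (Icc 0 l) := fun x hx => IccExtend_of_mem _ _ hx
  have hjmono : Monotone j := by
    rw [funext hj]; exact monotone_integral_Iic hJint hJnn
  have hjint : IntervalIntegrable j volume 0 l := hjmono.intervalIntegrable
  have hpt : ∀ x ∈ Icc 0 l, d * ∫ y in (0:ℝ)..l, J (x - y) * ψ y / ψ x ≤ lam - a₀ + d * j x := by
    intro x hx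
    have hint : ∫ y in (0:ℝ)..l, J (x - y) * ψ y = ∫ y in (0:ℝ)..l, J (x - y) * φ y :=
      intervalIntegral.integral_congr fun y hy => by
        rw [uIcc_of_le hl.le] at hy; simp only [hψφ hy]
    rw [intervalIntegral.integral_div, hint, hψφ hx, mul_div_assoc', div_le_iff₀ (hφpos x hx)]
    linarith [hφ x hx]
  have hR : d * ∫ x in (0:ℝ)..l, ∫ y in (0:ℝ)..l, J (x - y) * ψ y / ψ x
      ≤ (lam - a₀) * l + d * ∫ x in (0:ℝ)..l, j x := by
    have hRc : Continuous fun x => ∫ y in (0:ℝ)..l, J (x - y) * ψ y / ψ x :=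
      continuous_parametric_intervalIntegral_of_continuous'
        (((hJc.comp (continuous_fst.sub continuous_snd)).mul (hψc.comp continuous_snd)).div
          (hψc.comp continuous_fst) fun p => (hψpos _).ne') 0 l
    have := intervalIntegral.integral_mono_on hl.le
      ((hRc.intervalIntegrable 0 l).const_mul d)
      (intervalIntegrable_const.add (hjint.const_mul d)) hpt
    rwa [intervalIntegral.integral_const_mul, intervalIntegral.integral_add intervalIntegrable_const
      (hjint.const_mul d), intervalIntegral.integral_const, intervalIntegral.integral_const_mul,
      sub_zero, smul_eq_mul, mul_comm l] at this
  have hsym := integral_integral_le_integral_integral_mul_div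
    (k := fun x y => J (x - y)) (hJc.comp (continuous_fst.sub continuous_snd))
    (fun x y => by rw [← neg_sub, hJeven]) (fun _ _ => hJnn _) hψc hψpos hl.le
  have hQ : ∫ x in (0:ℝ)..l, ∫ y in (0:ℝ)..l, J (x - y)
      = (∫ x in (0:ℝ)..l, j x) - ∫ x in -l..0, j x := by
    have htail : IntervalIntegrable (fun x => j (x - l)) volume 0 l :=
      (hjmono.comp fun _ _ h => sub_le_sub_right h l).intervalIntegrable
    simp_rw [integral_comp_sub_eq_integral_Iic_sub hJint, ← hj]
    rw [intervalIntegral.integral_sub hjint htail, intervalIntegral.integral_comp_sub_right]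
    simp
  have hmul : a₀ * l - d * ∫ x in -l..0, j x ≤ lam * l := by
    nlinarith [mul_le_mul_of_nonneg_left hsym hd]
  calc a₀ - d * (l⁻¹ * ∫ x in -l..0, j x) = (a₀ * l - d * ∫ x in -l..0, j x) / l := by field_simp
    _ ≤ lam := by rwa [div_le_iff₀ hl]

theorem stmt5_general (d a₀ : ℝ) (hd : 0 < d)
    (J : ℝ → ℝ)
    (hJc : Continuous J) (hJnn : ∀ x, 0 ≤ J x)
    (hJeven : ∀ x, J (-x) = J x)
    (hJint : Integrable J)
    (j : ℝ → ℝ) (hj : ∀ x, j x = ∫ y in Ioi (0:ℝ), J (x - y)) :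
    (∀ l > (0:ℝ), lamP d a₀ J j l ≤ a₀) ∧
    Tendsto (fun l => lamP d a₀ J j l) atTop (nhds a₀) := by
  have hjIic : ∀ x, j x = ∫ z in Iic x, J z := fun x => by
    rw [hj, integral_Ioi_comp_sub, sub_zero, integral_Iic_eq_integral_Iio]
  have hjK : j = fun x => ∫ z in Iic x, J z := funext hjIic
  have hmem : ∀ l, a₀ ∈ lamPSet d a₀ J j l := mem_lamPSet_self hd.le a₀ hJnn hJint hjIic
  have hlow : ∀ l > 0, ∀ lam ∈ lamPSet d a₀ J j l, a₀ - d * (l⁻¹ * ∫ x in -l..0, j x) ≤ lam :=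
    fun l hl _ => sub_le_of_mem_lamPSet hd.le hl hJc hJnn hJeven hJint hjIic
  have hub : ∀ l > 0, lamP d a₀ J j l ≤ a₀ := fun l hl => by
    rw [lamP_eq_sInf]; exact csInf_le ⟨_, hlow l hl⟩ (hmem l)
  have hmean : Tendsto (fun l => l⁻¹ * ∫ x in -l..0, j x) atTop (𝓝 0) :=
    tendsto_inv_mul_integral_of_tendsto_atBot (hjK ▸ monotone_integral_Iic hJint hJnn)
      (hjK ▸ tendsto_integral_Iic_atBot hJint)
  have hlower : Tendsto (fun l => a₀ - d * (l⁻¹ * ∫ x in -l..0, j x)) atTop (𝓝 a₀) := by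
    simpa using (hmean.const_mul d).const_sub a₀
  refine ⟨hub, tendsto_of_tendsto_of_tendsto_of_le_of_le' hlower tendsto_const_nhds ?_ ?_⟩
  · filter_upwards [eventually_gt_atTop 0] with l hl
    rw [lamP_eq_sInf]
    exact le_csInf ⟨a₀, hmem l⟩ (hlow l hl)
  · filter_upwards [eventually_gt_atTop 0] with l hl using hub l hl

/-- Lemma 2.3(2): λ_p(L^N_{(0,l)} + a₀) ≤ a₀ for all l > 0, and
λ_p(L^N_{(0,l)} + a₀) → a₀ as l → ∞. -/
theorem stmt5 (d a₀ : ℝ) (hd : 0 < d) (ha₀ : 0 < a₀)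
    (J : ℝ → ℝ)
    (hJc : Continuous J) (hJnn : ∀ x, 0 ≤ J x) (hJ0 : 0 < J 0)
    (hJeven : ∀ x, J (-x) = J x)
    (hJint : Integrable J) (hJ1 : ∫ x, J x = 1)
    (j : ℝ → ℝ) (hj : ∀ x, j x = ∫ y in Ioi (0:ℝ), J (x - y)) :
    (∀ l > (0:ℝ), lamP d a₀ J j l ≤ a₀) ∧
    Tendsto (fun l => lamP d a₀ J j l) atTop (nhds a₀) :=
  stmt5_general d a₀ hd J hJc hJnn hJeven hJint j hj
end

section
/- Let d, a₀ > 0 and J satisfy condition (J), let j(x) = ∫_0^∞ J(x−y) dy, and let λ_p(l) be the principal eigenvalue of the operator φ ↦ d ∫_0^l J(·−y) φ(y) dy − d j(·) φ + a₀ φ on C([0,l]), with positive eigenfunction φ₁. Then lim_{l→0^+} λ_p(l) = a₀ − d/2. -/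
open MeasureTheory Filter Set intervalIntegral

/-!
At a maximum point `x₀` of the positive eigenfunction `φ` the integral term of the eigenvalue
equation is at most `M l φ(x₀)` in absolute value, where `M` bounds `|J|` on `[-l, l]`; hence
`λ_p(l)` is within `|d| M l` of `a₀ - d j(x₀)`. As `J` is even with mass `1`, `j(0) = 1/2`, and
`j(x₀) - 1/2 = ∫_0^{x₀} J` is at most `M l` in absolute value.
-/

theorem setIntegral_Ioi_zero_comp_sub (J : ℝ → ℝ) (x : ℝ) :
    ∫ y in Ioi (0:ℝ), J (x - y) = ∫ t in Iic x, J t := by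
  have hpre : (fun t : ℝ => x - t) ⁻¹' Iio x = Ioi 0 := by
    ext t; simp
  rw [← hpre, (Measure.measurePreserving_sub_left volume x).setIntegral_preimage_emb
    (MeasurableEquiv.subLeft x).measurableEmbedding J (Iio x)]
  exact setIntegral_congr_set Iio_ae_eq_Iic

theorem setIntegral_Iic_zero_of_even {J : ℝ → ℝ} (hJeven : ∀ x, J (-x) = J x)
    (hJint : Integrable J) : ∫ t in Iic (0:ℝ), J t = (∫ x, J x) / 2 := by
  have hIoi : ∫ t in Ioi (0:ℝ), J t = ∫ t in Iic (0:ℝ), J t := by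
    simpa [hJeven] using integral_comp_neg_Ioi 0 J
  have hsum := integral_Iic_add_Ioi (b := 0) hJint.integrableOn hJint.integrableOn
  linarith

theorem abs_setIntegral_Ioi_comp_sub_sub_half_le {J : ℝ → ℝ} {x M : ℝ}
    (hJeven : ∀ x, J (-x) = J x) (hJint : Integrable J) (hJ1 : ∫ x, J x = 1) (hx : 0 ≤ x)
    (hM : ∀ t ∈ Icc 0 x, ‖J t‖ ≤ M) :
    |(∫ y in Ioi (0:ℝ), J (x - y)) - 1 / 2| ≤ M * x := by
  have half : (1 : ℝ) / 2 = ∫ t in Iic (0:ℝ), J t := by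
    rw [setIntegral_Iic_zero_of_even hJeven hJint, hJ1]
  rw [setIntegral_Ioi_zero_comp_sub, half,
    integral_Iic_sub_Iic hJint.integrableOn hJint.integrableOn, ← Real.norm_eq_abs]
  have hM' : ∀ t ∈ uIoc 0 x, ‖J t‖ ≤ M := fun t ht =>
    hM t (Ioc_subset_Icc_self (by rwa [uIoc_of_le hx] at ht))
  simpa [abs_of_nonneg hx] using norm_integral_le_of_norm_le_const hM'

theorem exists_abs_eigenvalue_sub_le {J φ j : ℝ → ℝ} {d a₀ μ l M : ℝ} (hl : 0 ≤ l)
    (hJ : ∀ t ∈ Icc (-l) l, ‖J t‖ ≤ M)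
    (hφc : ContinuousOn φ (Icc 0 l)) (hφpos : ∀ x ∈ Icc 0 l, 0 < φ x)
    (heig : ∀ x ∈ Icc 0 l,
      d * (∫ y in (0:ℝ)..l, J (x - y) * φ y) - d * j x * φ x + a₀ * φ x = μ * φ x) :
    ∃ x₀ ∈ Icc 0 l, |μ - (a₀ - d * j x₀)| ≤ |d| * M * l := by
  obtain ⟨x₀, hx₀, hmax⟩ := isCompact_Icc.exists_isMaxOn (nonempty_Icc.mpr hl) hφc
  refine ⟨x₀, hx₀, ?_⟩
  have hP : 0 < φ x₀ := hφpos x₀ hx₀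
  have hI : |∫ y in (0:ℝ)..l, J (x₀ - y) * φ y| ≤ M * φ x₀ * l := by
    have hbound : ∀ y ∈ uIoc 0 l, ‖J (x₀ - y) * φ y‖ ≤ M * φ x₀ := by
      intro y hy
      have hy : y ∈ Icc 0 l := Ioc_subset_Icc_self (by rwa [uIoc_of_le hl] at hy)
      have hJy : ‖J (x₀ - y)‖ ≤ M :=
        hJ _ ⟨by linarith [hx₀.1, hy.2], by linarith [hx₀.2, hy.1]⟩
      rw [norm_mul, Real.norm_eq_abs (φ y), abs_of_pos (hφpos y hy)]
      exact mul_le_mul hJy (hmax hy) (hφpos y hy).le ((norm_nonneg _).trans hJy)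
    simpa [abs_of_nonneg hl] using norm_integral_le_of_norm_le_const hbound
  have hdiff : (μ - (a₀ - d * j x₀)) * φ x₀ = d * ∫ y in (0:ℝ)..l, J (x₀ - y) * φ y := by
    linear_combination -(heig x₀ hx₀)
  rw [← mul_le_mul_iff_left₀ hP, ← abs_of_pos hP, ← abs_mul, hdiff, abs_mul, abs_of_pos hP]
  nlinarith [abs_nonneg d]

theorem abs_eigenvalue_sub_le {J φ j : ℝ → ℝ} {d a₀ μ l M : ℝ}
    (hJeven : ∀ x, J (-x) = J x) (hJint : Integrable J) (hJ1 : ∫ x, J x = 1)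
    (hj : ∀ x, j x = ∫ y in Ioi (0:ℝ), J (x - y)) (hl : 0 ≤ l)
    (hJ : ∀ t ∈ Icc (-l) l, ‖J t‖ ≤ M)
    (hφc : ContinuousOn φ (Icc 0 l)) (hφpos : ∀ x ∈ Icc 0 l, 0 < φ x)
    (heig : ∀ x ∈ Icc 0 l,
      d * (∫ y in (0:ℝ)..l, J (x - y) * φ y) - d * j x * φ x + a₀ * φ x = μ * φ x) :
    |μ - (a₀ - d / 2)| ≤ 2 * |d| * M * l := by
  obtain ⟨x₀, hx₀, hμ⟩ := exists_abs_eigenvalue_sub_le hl hJ hφc hφpos heig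
  have hM0 : 0 ≤ M := (norm_nonneg _).trans (hJ 0 ⟨by linarith, hl⟩)
  have hj₀ : |j x₀ - 1 / 2| ≤ M * l := by
    rw [hj]
    refine (abs_setIntegral_Ioi_comp_sub_sub_half_le hJeven hJint hJ1 hx₀.1
      fun t ht => hJ t ⟨by linarith [ht.1], ht.2.trans hx₀.2⟩).trans ?_
    exact mul_le_mul_of_nonneg_left hx₀.2 hM0
  calc |μ - (a₀ - d / 2)| = |(μ - (a₀ - d * j x₀)) + d * (1 / 2 - j x₀)| := by
        congr 1; ring
    _ ≤ |d| * M * l + |d| * (M * l) := by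
      grw [abs_add_le, hμ, abs_mul, abs_sub_comm, hj₀]
    _ = 2 * |d| * M * l := by ring

theorem stmt6_general (d a₀ : ℝ)
    (J : ℝ → ℝ)
    (hJc : Continuous J)
    (hJeven : ∀ x, J (-x) = J x)
    (hJint : Integrable J) (hJ1 : ∫ x, J x = 1)
    (j : ℝ → ℝ) (hj : ∀ x, j x = ∫ y in Ioi (0:ℝ), J (x - y))
    (lam : ℝ → ℝ)
    (heig : ∀ l > (0:ℝ), ∃ φ : ℝ → ℝ, ContinuousOn φ (Icc 0 l) ∧
      (∀ x ∈ Icc 0 l, 0 < φ x) ∧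
      ∀ x ∈ Icc 0 l,
        d * (∫ y in (0:ℝ)..l, J (x - y) * φ y) - d * j x * φ x + a₀ * φ x
          = lam l * φ x) :
    Tendsto lam (nhdsWithin 0 (Ioi 0)) (nhds (a₀ - d / 2)) := by
  obtain ⟨M, hM⟩ :=
    (isCompact_Icc (a := (-1:ℝ)) (b := 1)).exists_bound_of_continuousOn hJc.continuousOn
  have key : ∀ l ∈ Ioc (0:ℝ) 1, ‖lam l - (a₀ - d / 2)‖ ≤ 2 * |d| * M * l := by
    rintro l ⟨hl0, hl1⟩
    obtain ⟨φ, hφc, hφpos, hφeig⟩ := heig l hl0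
    exact abs_eigenvalue_sub_le hJeven hJint hJ1 hj hl0.le
      (fun t ht => hM t ⟨by linarith [ht.1], by linarith [ht.2]⟩) hφc hφpos hφeig
  rw [tendsto_iff_norm_sub_tendsto_zero]
  refine squeeze_zero' (g := fun l => 2 * |d| * M * l)
    (Eventually.of_forall fun _ => norm_nonneg _) ?_ ?_
  · filter_upwards [Ioc_mem_nhdsGT one_pos] with l hl using key l hl
  · simpa using ((tendsto_id (x := nhds (0:ℝ))).const_mul (2 * |d| * M)).mono_left
      nhdsWithin_le_nhds

/-- Lemma 2.3(3): if for each l > 0 the number lam l is a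
principal eigenvalue of φ ↦ d∫_0^l J(·−y)φ(y)dy − d j φ + a₀ φ with a positive
continuous eigenfunction, then lam l → a₀ − d/2 as l → 0⁺. -/
theorem stmt6 (d a₀ : ℝ) (hd : 0 < d) (ha₀ : 0 < a₀)
    (J : ℝ → ℝ)
    (hJc : Continuous J) (hJnn : ∀ x, 0 ≤ J x) (hJ0 : 0 < J 0)
    (hJeven : ∀ x, J (-x) = J x)
    (hJint : Integrable J) (hJ1 : ∫ x, J x = 1)
    (hJbdd : ∃ M, ∀ x, J x ≤ M)
    (j : ℝ → ℝ) (hj : ∀ x, j x = ∫ y in Ioi (0:ℝ), J (x - y))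
    (lam : ℝ → ℝ)
    (heig : ∀ l > (0:ℝ), ∃ φ : ℝ → ℝ, ContinuousOn φ (Icc 0 l) ∧
      (∀ x ∈ Icc 0 l, 0 < φ x) ∧
      ∀ x ∈ Icc 0 l,
        d * (∫ y in (0:ℝ)..l, J (x - y) * φ y) - d * j x * φ x + a₀ * φ x
          = lam l * φ x) :
    Tendsto lam (nhdsWithin 0 (Ioi 0)) (nhds (a₀ - d / 2)) :=
  stmt6_general d a₀ J hJc hJeven hJint hJ1 j hj lam heig
end

section
/- Let d > 0, J satisfy condition (J), and f satisfy (F1)–(F3) with unique positive zero u*. If U : [0,∞) → ℝ is a bounded positive solution of d ∫_0^∞ J(x−y) U(y) dy − d U(x) + f(U(x)) = 0 on [0,∞), then U(x) ≤ u* for all x ≥ 0; that is, sup_{x≥0} U(x) ≤ u*. -/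
open MeasureTheory Set

/-!
Let `V` be the supremum of `U`. Since `J ≥ 0` has total mass one, the nonlocal term is at most
`V`, so the equation gives `f (U x) ≥ d (U x - V)` everywhere. If `V > u*`, pick `u* < w < V`:
because `f u / u` decreases strictly, `f u < f w < 0` for all `u > w`, which contradicts the
inequality at points where `U x` is close enough to `V`.
-/

lemma setIntegral_mul_le_of_integral_eq_one {J U : ℝ → ℝ} {s : Set ℝ} {V : ℝ}
    (hs : MeasurableSet s) (hJnn : ∀ x, 0 ≤ J x) (hJint : Integrable J) (hJ1 : ∫ x, J x = 1)
    (hV : 0 ≤ V) (hU : ∀ y ∈ s, U y ≤ V) (x : ℝ) :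
    ∫ y in s, J (x - y) * U y ≤ V := by
  by_cases h : IntegrableOn (fun y => J (x - y) * U y) s
  · have hJx : Integrable (fun y => J (x - y)) := hJint.comp_sub_left x
    calc ∫ y in s, J (x - y) * U y
        ≤ ∫ y in s, J (x - y) * V :=
          setIntegral_mono_on h (hJx.integrableOn.mul_const V) hs
            fun y hy => mul_le_mul_of_nonneg_left (hU y hy) (hJnn _)
      _ = (∫ y in s, J (x - y)) * V := integral_mul_const V _
      _ ≤ (∫ y, J (x - y)) * V :=
          mul_le_mul_of_nonneg_right
            (setIntegral_le_integral hJx (.of_forall fun _ => hJnn _)) hV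
      _ = V := by rw [integral_sub_left_eq_self J volume x, hJ1, one_mul]
  · rw [integral_undef h]
    exact hV

lemma neg_of_div_strictAntiOn {f : ℝ → ℝ} {ustar w : ℝ}
    (hdec : StrictAntiOn (fun u => f u / u) (Ioi 0)) (hustar : 0 < ustar) (hfu : f ustar = 0)
    (hw : ustar < w) : f w < 0 := by
  have h : f w / w < f ustar / ustar := hdec hustar (hustar.trans hw) hw
  rw [hfu, zero_div] at h
  exact neg_of_div_neg_left h (hustar.trans hw).le

lemma strictAntiOn_Ioi_of_div_strictAntiOn {f : ℝ → ℝ} {ustar : ℝ}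
    (hdec : StrictAntiOn (fun u => f u / u) (Ioi 0)) (hustar : 0 < ustar) (hfu : f ustar = 0) :
    StrictAntiOn f (Ioi ustar) := by
  intro w (hw : ustar < w) u _ hwu
  have hw0 : 0 < w := hustar.trans hw
  have hdiv : f u / u < f w / w := hdec hw0 (hw0.trans hwu) hwu
  have hfw : f w / w < 0 := div_neg_of_neg_of_pos (neg_of_div_strictAntiOn hdec hustar hfu hw) hw0
  calc f u = u * (f u / u) := by field_simp [(hw0.trans hwu).ne']
    _ < u * (f w / w) := mul_lt_mul_of_pos_left hdiv (hw0.trans hwu)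
    _ < w * (f w / w) := mul_lt_mul_of_neg_right hwu hfw
    _ = f w := by field_simp

lemma exists_lt_mul_sub_of_isLUB {f : ℝ → ℝ} {ustar d V : ℝ} {S : Set ℝ}
    (hdec : StrictAntiOn (fun u => f u / u) (Ioi 0)) (hustar : 0 < ustar) (hfu : f ustar = 0)
    (hd : 0 < d) (hV : IsLUB S V) (hlt : ustar < V) :
    ∃ u ∈ S, f u < d * (u - V) := by
  obtain ⟨w, hw, hwV⟩ := exists_between hlt
  have hfw : f w < 0 := neg_of_div_strictAntiOn hdec hustar hfu hw
  set ε := min (V - w) (-f w / d)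
  have hε : 0 < ε := lt_min (sub_pos.mpr hwV) (div_pos (neg_pos.mpr hfw) hd)
  obtain ⟨u, hu, hεu, -⟩ := hV.exists_between (sub_lt_self V hε)
  have hwu : w < u := by linarith [min_le_left (V - w) (-f w / d)]
  have hdε : d * ε ≤ -f w := by
    calc d * ε ≤ d * (-f w / d) := mul_le_mul_of_nonneg_left (min_le_right _ _) hd.le
      _ = -f w := by field_simp
  have hfu_lt : f u < f w :=
    strictAntiOn_Ioi_of_div_strictAntiOn hdec hustar hfu hw (hw.trans hwu) hwu
  have hdu : -(d * ε) < d * (u - V) := by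
    rw [← mul_neg]; exact mul_lt_mul_of_pos_left (by linarith) hd
  exact ⟨u, hu, by linarith⟩

theorem stmt8_general (d : ℝ) (hd : 0 < d)
    (J : ℝ → ℝ)
    (hJnn : ∀ x, 0 ≤ J x)
    (hJint : Integrable J) (hJ1 : ∫ x, J x = 1)
    (f : ℝ → ℝ)
    (hdec : StrictAntiOn (fun u => f u / u) (Ioi 0))
    (ustar : ℝ) (hustar : 0 < ustar ∧ f ustar = 0)
    (U : ℝ → ℝ)
    (hUbdd : ∃ M, ∀ x ≥ (0:ℝ), U x ≤ M)
    (hUeq : ∀ x ≥ (0:ℝ),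
      d * (∫ y in Ioi (0:ℝ), J (x - y) * U y) - d * U x + f (U x) = 0) :
    ∀ x ≥ (0:ℝ), U x ≤ ustar := by
  obtain ⟨M, hM⟩ := hUbdd
  have hbdd : BddAbove (U '' Ici 0) := ⟨M, by rintro _ ⟨x, hx, rfl⟩; exact hM x hx⟩
  obtain ⟨V, hV⟩ := Real.exists_isLUB (s := U '' Ici 0) ⟨U 0, 0, self_mem_Ici, rfl⟩ hbdd
  have hUV : ∀ x ≥ (0:ℝ), U x ≤ V := fun x hx => hV.1 ⟨x, hx, rfl⟩
  obtain ⟨hu, hfu⟩ := hustar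
  intro x hx
  refine (hUV x hx).trans (not_lt.mp fun hlt => ?_)
  obtain ⟨_, ⟨z, hz, rfl⟩, hfz⟩ := exists_lt_mul_sub_of_isLUB hdec hu hfu hd hV hlt
  have hconv : ∫ y in Ioi (0:ℝ), J (z - y) * U y ≤ V :=
    setIntegral_mul_le_of_integral_eq_one measurableSet_Ioi hJnn hJint hJ1
      (hu.trans hlt).le (fun y hy => hUV y (le_of_lt hy)) z
  have := mul_le_mul_of_nonneg_left hconv hd.le
  linarith [hUeq z hz]

/-- part of Lemma 2.4, Step 4: any bounded positive solution U of
d∫_0^∞ J(x−y)U(y)dy − dU + f(U) = 0 on [0,∞) satisfies U ≤ u*, where u* is the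
unique positive zero of f. -/
theorem stmt8 (d : ℝ) (hd : 0 < d)
    (J : ℝ → ℝ)
    (hJc : Continuous J) (hJnn : ∀ x, 0 ≤ J x) (hJ0 : 0 < J 0)
    (hJeven : ∀ x, J (-x) = J x)
    (hJint : Integrable J) (hJ1 : ∫ x, J x = 1)
    (f : ℝ → ℝ) (hf : ContDiff ℝ 1 f) (hf0 : f 0 = 0)
    (hf'0 : 0 < deriv f 0)
    (hdec : StrictAntiOn (fun u => f u / u) (Ioi 0))
    (K : ℝ) (hK : 0 < K) (hneg : ∀ u > K, f u < 0)
    (ustar : ℝ) (hustar : 0 < ustar ∧ f ustar = 0)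
    (U : ℝ → ℝ) (hUpos : ∀ x ≥ (0:ℝ), 0 < U x)
    (hUbdd : ∃ M, ∀ x ≥ (0:ℝ), U x ≤ M)
    (hUeq : ∀ x ≥ (0:ℝ),
      d * (∫ y in Ioi (0:ℝ), J (x - y) * U y) - d * U x + f (U x) = 0) :
    ∀ x ≥ (0:ℝ), U x ≤ ustar :=
  stmt8_general d hd J hJnn hJint hJ1 f hdec ustar hustar U hUbdd hUeq
end

section
/- Let J satisfy condition (J), λ > 0, and k : [0,∞) → ℝ satisfy condition (K): k continuous and bounded, inf k > 0, and k_∞ := lim_{x→∞} k(x) exists and is finite. If U : [0,∞) → ℝ is a continuous positive bounded solution of d ∫_0^∞ J(x−y) U(y) dy − d U(x) + U(x)(k(x) − λ U(x)) = 0 with inf_{x≥0} U(x) > 0, then liminf_{x→∞} U(x) ≥ k_∞/λ. -/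
open MeasureTheory Filter Set Topology

/-!
Take `xₙ → ∞` with `U xₙ → L := liminf U`. The equation gives
`∫₀^∞ J (xₙ - y) U y dy = U xₙ (d - k xₙ + λ U xₙ) / d → L (d - k∞ + λ L) / d`,
while, `J` being a probability density, the left side is eventually at least any `c < L`
(Fatou). Hence `L ≤ L (d - k∞ + λ L) / d`, i.e. `k∞ ≤ λ L` since `L ≥ inf U > 0`.
-/

theorem exists_lt_mul_intervalIntegral_of_integral_eq_one {J : ℝ → ℝ} (hJ : Integrable J)
    (hJ1 : ∫ x, J x = 1) {c c' : ℝ} (hc' : c' < c) :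
    ∃ A ≥ 0, c' < c * ∫ z in -A..A, J z := by
  have hlim : Tendsto (fun A ↦ c * ∫ z in -A..A, J z) atTop (𝓝 c) := by
    simpa [hJ1] using
      (intervalIntegral_tendsto_integral hJ tendsto_neg_atTop_atBot tendsto_id).const_mul c
  obtain ⟨A, hA, hA0⟩ := ((hlim.eventually_const_lt hc').and (eventually_ge_atTop 0)).exists
  exact ⟨A, hA0, hA⟩

/-- For large `x` the window `(x - A, x + A)`, which carries almost all the mass of
`J (x - ·)`, lies where `U ≥ c`; outside it the integrand is nonnegative. -/
theorem eventually_lt_setIntegral_Ioi_comp_sub_mul {J U : ℝ → ℝ} (hJ : Integrable J)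
    (hJnn : ∀ x, 0 ≤ J x) (hJ1 : ∫ x, J x = 1) {a M c c' : ℝ}
    (hU : AEStronglyMeasurable U (volume.restrict (Ioi a)))
    (hU0 : ∀ y > a, 0 ≤ U y) (hUM : ∀ y > a, U y ≤ M)
    (hc : ∀ᶠ y in atTop, c ≤ U y) (hc' : c' < c) :
    ∀ᶠ x in atTop, c' < ∫ y in Ioi a, J (x - y) * U y := by
  obtain ⟨A, hA0, hA⟩ := exists_lt_mul_intervalIntegral_of_integral_eq_one hJ hJ1 hc'
  obtain ⟨R, hR⟩ := eventually_atTop.1 hc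
  filter_upwards [eventually_ge_atTop (max R a + A)] with x hx
  have hwindow : Ioc (x - A) (x + A) ⊆ Ioi a := fun y hy ↦ by
    have := hy.1; simp only [mem_Ioi]; linarith [le_max_right R a]
  have hint : IntegrableOn (fun y ↦ J (x - y) * U y) (Ioi a) :=
    (hJ.comp_sub_left x).restrict.mul_bdd hU <|
      (ae_restrict_iff' measurableSet_Ioi).2 <| ae_of_all _ fun y hy ↦ by
        rw [Real.norm_eq_abs, abs_of_nonneg (hU0 y hy)]; exact hUM y hy
  have hshift : ∫ y in Ioc (x - A) (x + A), J (x - y) = ∫ z in -A..A, J z := by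
    rw [← intervalIntegral.integral_of_le (by linarith), intervalIntegral.integral_comp_sub_left]
    simp
  calc c' < c * ∫ z in -A..A, J z := hA
    _ = ∫ y in Ioc (x - A) (x + A), c * J (x - y) := by rw [integral_const_mul, hshift]
    _ ≤ ∫ y in Ioc (x - A) (x + A), J (x - y) * U y := by
      refine setIntegral_mono_on ((hJ.comp_sub_left x).const_mul c).integrableOn
        (hint.mono_set hwindow) measurableSet_Ioc fun y hy ↦ ?_
      rw [mul_comm]
      exact mul_le_mul_of_nonneg_left (hR y (by linarith [hy.1, le_max_left R a])) (hJnn _)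
    _ ≤ ∫ y in Ioi a, J (x - y) * U y :=
      setIntegral_mono_set hint
        ((ae_restrict_iff' measurableSet_Ioi).2 <| ae_of_all _ fun y hy ↦
          mul_nonneg (hJnn _) (hU0 y hy))
        hwindow.eventuallyLE

theorem stmt10_general (d lam : ℝ) (hd : 0 < d) (hlam : 0 < lam)
    (J : ℝ → ℝ)
    (hJnn : ∀ x, 0 ≤ J x)
    (hJint : Integrable J) (hJ1 : ∫ x, J x = 1)
    (k : ℝ → ℝ)
    (kinf : ℝ) (hklim : Tendsto k atTop (nhds kinf))
    (U : ℝ → ℝ) (hUc : ContinuousOn U (Ici 0))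
    (hUbdd : ∃ M, ∀ x ≥ (0:ℝ), U x ≤ M)
    (hUinf : ∃ m > (0:ℝ), ∀ x ≥ (0:ℝ), m ≤ U x)
    (hUeq : ∀ x ≥ (0:ℝ),
      d * (∫ y in Ioi (0:ℝ), J (x - y) * U y) - d * U x
        + U x * (k x - lam * U x) = 0) :
    kinf / lam ≤ Filter.liminf U atTop := by
  obtain ⟨M, hM⟩ := hUbdd
  obtain ⟨m, hm, hmU⟩ := hUinf
  set L := liminf U atTop
  have hmU' : ∀ᶠ x in atTop, m ≤ U x := eventually_atTop.2 ⟨0, hmU⟩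
  have hbdd : IsBoundedUnder (· ≤ ·) atTop U := ⟨M, eventually_map.2 (eventually_atTop.2 ⟨0, hM⟩)⟩
  have hbdd' : IsBoundedUnder (· ≥ ·) atTop U := ⟨m, eventually_map.2 hmU'⟩
  have hL : 0 < L := hm.trans_le (le_liminf_of_le hbdd.isCoboundedUnder_ge hmU')
  obtain ⟨xs, hUxs, hxs⟩ := exists_seq_tendsto_liminf hbdd.isCoboundedUnder_ge hbdd'
  have hconv : Tendsto (fun n ↦ ∫ y in Ioi (0:ℝ), J (xs n - y) * U y) atTop
      (𝓝 (L * (d - kinf + lam * L) / d)) := by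
    have hrhs := ((hUxs.mul (((tendsto_const_nhds (x := d)).sub (hklim.comp hxs)).add
      (hUxs.const_mul lam))).div_const d)
    refine hrhs.congr' ?_
    filter_upwards [hxs.eventually_ge_atTop 0] with n hn
    have := hUeq (xs n) hn
    field_simp
    simp only [Function.comp_apply]
    linarith
  have hLle : L ≤ L * (d - kinf + lam * L) / d := by
    refine le_of_forall_lt_imp_le_of_dense fun c hc ↦ ge_of_tendsto hconv ?_
    obtain ⟨c₁, hcc₁, hc₁⟩ := exists_between hc
    refine hxs.eventually ((eventually_lt_setIntegral_Ioi_comp_sub_mul hJint hJnn hJ1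
      ((hUc.mono Ioi_subset_Ici_self).aestronglyMeasurable measurableSet_Ioi)
      (fun y hy ↦ hm.le.trans (hmU y hy.le)) (fun y hy ↦ hM y hy.le)
      ((eventually_lt_of_lt_liminf hc₁ hbdd').mono fun _ h ↦ h.le) hcc₁).mono fun _ h ↦ h.le)
  rw [le_div_iff₀ hd] at hLle
  rw [div_le_iff₀ hlam]
  nlinarith

/-- part of Lemma 2.7(1): for the logistic-type steady state
problem on the half line with coefficient k satisfying (K), any continuous
bounded positive solution U with inf U > 0 satisfies liminf_{x→∞} U ≥ k_∞/λ. -/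
theorem stmt10 (d lam : ℝ) (hd : 0 < d) (hlam : 0 < lam)
    (J : ℝ → ℝ)
    (hJc : Continuous J) (hJnn : ∀ x, 0 ≤ J x) (hJ0 : 0 < J 0)
    (hJeven : ∀ x, J (-x) = J x)
    (hJint : Integrable J) (hJ1 : ∫ x, J x = 1)
    (k : ℝ → ℝ) (hkc : ContinuousOn k (Ici 0))
    (hkbdd : ∃ M, ∀ x ≥ (0:ℝ), k x ≤ M)
    (hkinf : ∃ m > (0:ℝ), ∀ x ≥ (0:ℝ), m ≤ k x)
    (kinf : ℝ) (hklim : Tendsto k atTop (nhds kinf))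
    (U : ℝ → ℝ) (hUc : ContinuousOn U (Ici 0))
    (hUbdd : ∃ M, ∀ x ≥ (0:ℝ), U x ≤ M)
    (hUinf : ∃ m > (0:ℝ), ∀ x ≥ (0:ℝ), m ≤ U x)
    (hUeq : ∀ x ≥ (0:ℝ),
      d * (∫ y in Ioi (0:ℝ), J (x - y) * U y) - d * U x
        + U x * (k x - lam * U x) = 0) :
    kinf / lam ≤ Filter.liminf U atTop :=
  stmt10_general d lam hd hlam J hJnn hJint hJ1 k kinf hklim U hUc hUbdd hUinf hUeq
end

section
/- Let J satisfy condition (J), λ > 0, and k satisfy condition (K) with limit k_∞. If U : [0,∞) → ℝ is a continuous positive bounded solution of d ∫_0^∞ J(x−y) U(y) dy − d U(x) + U(x)(k(x) − λ U(x)) = 0, then limsup_{x→∞} U(x) ≤ k_∞/λ. -/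
/-!
Let `L = limsup U > 0`. The nonlocal term `∫ J(x - y) U(y) dy` is eventually at most `L + ε`:
where `y` is not yet large, `J(x - y)` only contributes a tail of `J`, which is small.
Evaluating the equation at points where `U` is close to `L` and `k` close to `k_∞` gives
`λ (L - ε)² ≤ (L + ε)(k_∞ + ε) + 2dε`, and letting `ε → 0` yields `λ L ≤ k_∞`.
-/

open MeasureTheory Filter Set
open scoped Topology

theorem tendsto_setIntegral_Ioi_atTop_zero {f : ℝ → ℝ} (hf : Integrable f) :
    Tendsto (fun R => ∫ z in Ioi R, f z) atTop (𝓝 0) := by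
  have hempty : (⋂ R : ℝ, Ioi R) = ∅ :=
    eq_empty_of_forall_notMem fun z hz => lt_irrefl z (mem_iInter.1 hz z)
  simpa [hempty] using tendsto_setIntegral_of_antitone (fun R => measurableSet_Ioi)
    (fun _ _ h => Ioi_subset_Ioi h) ⟨0, hf.integrableOn⟩

section Convolution

variable {J U : ℝ → ℝ} {M c : ℝ}

theorem setIntegral_Ioi_mul_le_of_le (hJnn : ∀ x, 0 ≤ J x) (hJint : Integrable J)
    (hJ1 : ∫ x, J x = 1) (hU0 : ∀ y > 0, 0 ≤ U y) (hUM : ∀ y > 0, U y ≤ M)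
    (hM : 0 ≤ M) (hc : 0 ≤ c) {x R : ℝ} (hUc : ∀ y ≥ x - R, U y ≤ c) :
    ∫ y in Ioi 0, J (x - y) * U y ≤ M * (∫ z in Ioi R, J z) + c := by
  set h : ℝ → ℝ := fun y => M * (Ioi R).indicator J (x - y) + c * J (x - y)
  have hJx : Integrable fun y => J (x - y) := hJint.comp_sub_left x
  have hint : Integrable h :=
    ((hJint.indicator measurableSet_Ioi).comp_sub_left x |>.const_mul M).add (hJx.const_mul c)
  have hh0 : 0 ≤ h := fun y =>
    add_nonneg (mul_nonneg hM (indicator_nonneg (fun z _ => hJnn z) _)) (mul_nonneg hc (hJnn _))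
  have hle : ∀ y ∈ Ioi (0 : ℝ), J (x - y) * U y ≤ h y := by
    intro y hy
    by_cases hyR : R < x - y
    · have := mul_le_mul_of_nonneg_left (hUM y hy) (hJnn (x - y))
      simp only [h, indicator_of_mem (show x - y ∈ Ioi R from hyR)]
      nlinarith [mul_nonneg hc (hJnn (x - y))]
    · have := mul_le_mul_of_nonneg_left (hUc y (by linarith)) (hJnn (x - y))
      simp only [h, indicator_of_notMem (show x - y ∉ Ioi R from hyR)]
      linarith
  calc ∫ y in Ioi 0, J (x - y) * U y
      ≤ ∫ y in Ioi 0, h y := integral_mono_of_nonneg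
        ((ae_restrict_iff' measurableSet_Ioi).2 (.of_forall fun y hy =>
          mul_nonneg (hJnn _) (hU0 y hy)))
        hint.integrableOn ((ae_restrict_iff' measurableSet_Ioi).2 (.of_forall hle))
    _ ≤ ∫ y, h y := setIntegral_le_integral hint (Eventually.of_forall hh0)
    _ = M * (∫ z in Ioi R, J z) + c := by
      rw [integral_add _ (hJx.const_mul c), integral_const_mul, integral_const_mul,
        integral_sub_left_eq_self ((Ioi R).indicator J) volume x,
        integral_indicator measurableSet_Ioi, integral_sub_left_eq_self J volume x, hJ1, mul_one]
      exact ((hJint.indicator measurableSet_Ioi).comp_sub_left x).const_mul M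

theorem eventually_setIntegral_Ioi_mul_le (hJnn : ∀ x, 0 ≤ J x) (hJint : Integrable J)
    (hJ1 : ∫ x, J x = 1) (hU0 : ∀ y > 0, 0 ≤ U y) (hUM : ∀ y > 0, U y ≤ M)
    (hUc : ∀ᶠ y in atTop, U y ≤ c) {ε : ℝ} (hε : 0 < ε) :
    ∀ᶠ x in atTop, ∫ y in Ioi 0, J (x - y) * U y ≤ c + ε := by
  have hM : 0 ≤ M := (hU0 1 one_pos).trans (hUM 1 one_pos)
  obtain ⟨X, hX⟩ := eventually_atTop.1 (hUc.and (eventually_gt_atTop 0))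
  have hc : 0 ≤ c := (hU0 _ (hX X le_rfl).2).trans (hX X le_rfl).1
  have htail := (tendsto_setIntegral_Ioi_atTop_zero hJint).const_mul M
  rw [mul_zero] at htail
  obtain ⟨R, hR⟩ := (htail.eventually_lt_const hε).exists
  filter_upwards [eventually_ge_atTop (X + R)] with x hx
  have := setIntegral_Ioi_mul_le_of_le hJnn hJint hJ1 hU0 hUM hM hc
    (x := x) (R := R) fun y hy => (hX y (by linarith)).1
  linarith

end Convolution

theorem sq_le_of_logistic_eq {d lam T u κ L K ε : ℝ} (hd : 0 ≤ d) (hlam : 0 ≤ lam)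
    (hK : 0 ≤ K + ε) (hLε : 0 ≤ L - ε) (heq : d * T - d * u + u * (κ - lam * u) = 0)
    (hT : T ≤ L + ε) (hu : L - ε ≤ u) (hu' : u ≤ L + ε) (hκ : κ ≤ K + ε) :
    lam * (L - ε) ^ 2 ≤ (L + ε) * (K + ε) + 2 * d * ε := by
  have hsq : lam * (L - ε) ^ 2 ≤ lam * u ^ 2 := by gcongr
  have huκ : u * κ ≤ (L + ε) * (K + ε) :=
    (mul_le_mul_of_nonneg_left hκ (hLε.trans hu)).trans (mul_le_mul_of_nonneg_right hu' hK)
  nlinarith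

theorem le_div_of_forall_sq_le {d lam L K : ℝ} (hlam : 0 < lam) (hL : 0 < L)
    (h : ∀ ε, 0 < ε → ε < L → lam * (L - ε) ^ 2 ≤ (L + ε) * (K + ε) + 2 * d * ε) :
    L ≤ K / lam := by
  have hlim : lam * (L - 0) ^ 2 ≤ (L + 0) * (K + 0) + 2 * d * 0 := by
    refine le_of_tendsto_of_tendsto (b := 𝓝[>] (0 : ℝ))
      ((Continuous.tendsto (f := fun ε => lam * (L - ε) ^ 2) (by fun_prop) 0).mono_left
        nhdsWithin_le_nhds)
      ((Continuous.tendsto (f := fun ε => (L + ε) * (K + ε) + 2 * d * ε) (by fun_prop) 0).mono_left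
        nhdsWithin_le_nhds) ?_
    filter_upwards [Ioo_mem_nhdsGT hL] with ε hε using h ε hε.1 hε.2
  rw [le_div_iff₀ hlam]
  nlinarith

theorem stmt11_general (d lam : ℝ) (hd : 0 < d) (hlam : 0 < lam)
    (J : ℝ → ℝ)
    (hJnn : ∀ x, 0 ≤ J x)
    (hJint : Integrable J) (hJ1 : ∫ x, J x = 1)
    (k : ℝ → ℝ)
    (hkinf : ∃ m > (0:ℝ), ∀ x ≥ (0:ℝ), m ≤ k x)
    (kinf : ℝ) (hklim : Tendsto k atTop (nhds kinf))
    (U : ℝ → ℝ)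
    (hUbdd : ∃ M, ∀ x ≥ (0:ℝ), U x ≤ M)
    (hUpos : ∀ x ≥ (0:ℝ), 0 < U x)
    (hUeq : ∀ x ≥ (0:ℝ),
      d * (∫ y in Ioi (0:ℝ), J (x - y) * U y) - d * U x
        + U x * (k x - lam * U x) = 0) :
    Filter.limsup U atTop ≤ kinf / lam := by
  obtain ⟨M, hM⟩ := hUbdd
  obtain ⟨m, hm, hmk⟩ := hkinf
  have hkinf : 0 ≤ kinf :=
    ge_of_tendsto hklim (eventually_atTop.2 ⟨0, fun x hx => (hm.trans_le (hmk x hx)).le⟩)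
  have hU0 : ∀ᶠ x in atTop, 0 ≤ U x := eventually_atTop.2 ⟨0, fun x hx => (hUpos x hx).le⟩
  have hbdd : IsBoundedUnder (· ≤ ·) atTop U := ⟨M, eventually_atTop.2 ⟨0, hM⟩⟩
  rcases (le_limsup_of_frequently_le hU0.frequently hbdd).eq_or_lt with hL | hL
  · rw [← hL]
    positivity
  set L := limsup U atTop
  refine le_div_of_forall_sq_le (d := d) hlam hL fun ε hε hεL => ?_
  have hconv := eventually_setIntegral_Ioi_mul_le hJnn hJint hJ1 (fun y hy => (hUpos y hy.le).le)
    (fun y hy => hM y hy.le) ((eventually_lt_of_limsup_lt (by linarith : L < L + ε / 2)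
      hbdd).mono fun _ => le_of_lt) (half_pos hε)
  obtain ⟨x, hUx, hTx, hUx', hkx, hx⟩ :=
    ((frequently_lt_of_lt_limsup (isCoboundedUnder_le_of_eventually_le atTop hU0)
      (by linarith : L - ε < L)).and_eventually (hconv.and
        ((eventually_lt_of_limsup_lt (by linarith : L < L + ε) hbdd).and
          ((hklim.eventually_lt_const (by linarith : kinf < kinf + ε)).and
            (eventually_ge_atTop 0))))).exists
  exact sq_le_of_logistic_eq hd.le hlam.le (by linarith) (by linarith) (hUeq x hx)
    (by linarith) hUx.le hUx'.le hkx.le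

/-- part of Lemma 2.7(1): for the logistic-type steady state
problem on the half line with coefficient k satisfying (K), any continuous
bounded positive solution U satisfies limsup_{x→∞} U ≤ k_∞/λ (STATEMENT 11, Lemma 2.7(1)). -/
theorem stmt11 (d lam : ℝ) (hd : 0 < d) (hlam : 0 < lam)
    (J : ℝ → ℝ)
    (hJc : Continuous J) (hJnn : ∀ x, 0 ≤ J x) (hJ0 : 0 < J 0)
    (hJeven : ∀ x, J (-x) = J x)
    (hJint : Integrable J) (hJ1 : ∫ x, J x = 1)
    (k : ℝ → ℝ) (hkc : ContinuousOn k (Ici 0))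
    (hkbdd : ∃ M, ∀ x ≥ (0:ℝ), k x ≤ M)
    (hkinf : ∃ m > (0:ℝ), ∀ x ≥ (0:ℝ), m ≤ k x)
    (kinf : ℝ) (hklim : Tendsto k atTop (nhds kinf))
    (U : ℝ → ℝ) (hUc : ContinuousOn U (Ici 0))
    (hUbdd : ∃ M, ∀ x ≥ (0:ℝ), U x ≤ M)
    (hUpos : ∀ x ≥ (0:ℝ), 0 < U x)
    (hUeq : ∀ x ≥ (0:ℝ),
      d * (∫ y in Ioi (0:ℝ), J (x - y) * U y) - d * U x
        + U x * (k x - lam * U x) = 0) :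
    Filter.limsup U atTop ≤ kinf / lam :=
  stmt11_general d lam hd hlam J hJnn hJint hJ1 k hkinf kinf hklim U hUbdd hUpos hUeq
end
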